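/- For every u ∈ ℝ, P(Σ_i λ_i t_i² > u) ≤ exp(−c u) · Π_i (1 − 2cλ_i)^{−1/2}. -/

import Mathlib

open MeasureTheory ProbabilityTheory Real Filter
open scoped ENNReal Topology

/-!
Chernoff's bound. A Gaussian integral gives `E exp(c λᵢ tᵢ²) = (1 - 2cλᵢ)^(-1/2)`, so by
independence the partial sums `Sₙ = Σ_{i<n} λᵢ tᵢ²` have moment generating function
`Π_{i<n} (1 - 2cλᵢ)^(-1/2)` at `c`; this product converges since `Σ log (1 - 2cλᵢ)` does.
As `E Σ |λᵢ| tᵢ² = Σ |λᵢ| < ∞`, `Sₙ → S` almost surely, and Fatou's lemma bounds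
`E exp(cS)` by the infinite product. Markov's inequality for `exp(cS)` concludes.
-/

lemma mgf_sq_gaussianReal {b : ℝ} (hb : b < 1 / 2) :
    mgf (fun x => x ^ 2) (gaussianReal 0 1) b = (1 - 2 * b) ^ (-(1 / 2) : ℝ) := by
  have hpdf (x : ℝ) : gaussianPDFReal 0 1 x • rexp (b * x ^ 2)
      = (√(2 * π))⁻¹ * rexp (-(1 / 2 - b) * x ^ 2) := by
    simp only [gaussianPDFReal, NNReal.coe_one, mul_one, sub_zero, smul_eq_mul]
    rw [mul_assoc, ← exp_add]
    ring_nf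
  rw [mgf, integral_gaussianReal_eq_integral_smul one_ne_zero]
  simp only [hpdf, integral_const_mul, integral_gaussian]
  rw [rpow_neg (by linarith), ← sqrt_eq_rpow, ← sqrt_inv, ← sqrt_inv,
    ← sqrt_mul (by positivity)]
  congr 1
  field_simp

lemma multipliable_one_sub_rpow {ι : Type*} {a : ι → ℝ} (ha : Summable a) (h : ∀ i, a i < 1)
    (p : ℝ) : Multipliable fun i => (1 - a i) ^ p := by
  refine Real.multipliable_of_summable_log (fun i => rpow_pos_of_pos (sub_pos.2 (h i)) p) ?_
  refine ((Real.summable_log_one_add_of_summable ha.neg).mul_left p).congr fun i => ?_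
  rw [Real.log_rpow (sub_pos.2 (h i)), sub_eq_add_neg]

section
variable {Ω : Type*} [MeasurableSpace Ω] {P : Measure Ω}

lemma ae_summable_mul_of_lintegral_enorm_le {Y : ℕ → Ω → ℝ}
    (hY : ∀ i, AEStronglyMeasurable (Y i) P) {C : ℝ≥0∞} (hC : C ≠ ∞)
    (hbound : ∀ i, ∫⁻ ω, ‖Y i ω‖ₑ ∂P ≤ C) {a : ℕ → ℝ} (ha : Summable a) :
    ∀ᵐ ω ∂P, Summable fun i => a i * Y i ω := by
  have hnorms : ∑' i, eLpNorm (fun ω => a i * Y i ω) 1 P ≠ ∞ := by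
    refine ne_top_of_le_ne_top (b := ∑' i, ‖a i‖ₑ * C) ?_ (ENNReal.tsum_le_tsum fun i => ?_)
    · rw [ENNReal.tsum_mul_right]
      exact ENNReal.mul_ne_top (tsum_enorm_ne_top_iff_summable_norm.2 ha.norm) hC
    · exact (eLpNorm_const_smul (a i) (Y i) 1 P).trans_le
        (by rw [eLpNorm_one_eq_lintegral_enorm]; gcongr; exact hbound i)
  filter_upwards [summable_norm_of_tsum_eLpNorm_ne_top le_rfl
    (fun i => (hY i).const_mul (a i)) hnorms] with ω hω
  exact hω.of_norm

lemma lintegral_exp_mul_le_of_tendsto_mgf {X : ℕ → Ω → ℝ} {S : Ω → ℝ} {t m : ℝ}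
    (hX : ∀ n, AEMeasurable (X n) P) (hint : ∀ n, Integrable (fun ω => rexp (t * X n ω)) P)
    (hlim : ∀ᵐ ω ∂P, Tendsto (fun n => X n ω) atTop (𝓝 (S ω)))
    (hmgf : Tendsto (fun n => mgf (X n) P t) atTop (𝓝 m)) :
    ∫⁻ ω, ENNReal.ofReal (rexp (t * S ω)) ∂P ≤ ENNReal.ofReal m := calc
  _ = ∫⁻ ω, liminf (fun n => ENNReal.ofReal (rexp (t * X n ω))) atTop ∂P := by
    refine lintegral_congr_ae ?_
    filter_upwards [hlim] with ω hω
    have hcont : Continuous fun x => ENNReal.ofReal (rexp (t * x)) :=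
      ENNReal.continuous_ofReal.comp (by fun_prop)
    exact ((hcont.tendsto _).comp hω).liminf_eq.symm
  _ ≤ liminf (fun n => ∫⁻ ω, ENNReal.ofReal (rexp (t * X n ω)) ∂P) atTop :=
    lintegral_liminf_le' fun n => ((hX n).const_mul t).exp.ennreal_ofReal
  _ = liminf (fun n => ENNReal.ofReal (mgf (X n) P t)) atTop := by
    simp_rw [mgf, ofReal_integral_eq_lintegral_ofReal (hint _)
      (ae_of_all _ fun _ => (exp_pos _).le)]
  _ = ENNReal.ofReal m := ((ENNReal.continuous_ofReal.tendsto m).comp hmgf).liminf_eq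

lemma measure_lt_le_of_tendsto_mgf {X : ℕ → Ω → ℝ} {S : Ω → ℝ} {t m : ℝ}
    (hX : ∀ n, AEMeasurable (X n) P) (hint : ∀ n, Integrable (fun ω => rexp (t * X n ω)) P)
    (hlim : ∀ᵐ ω ∂P, Tendsto (fun n => X n ω) atTop (𝓝 (S ω)))
    (hmgf : Tendsto (fun n => mgf (X n) P t) atTop (𝓝 m)) (ht : 0 ≤ t) (u : ℝ) :
    P {ω | u < S ω} ≤ ENNReal.ofReal (rexp (-t * u) * m) := by
  have hS : AEMeasurable S P := aemeasurable_of_tendsto_metrizable_ae' hX hlim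
  have hmarkov := mul_meas_ge_le_lintegral₀ (hS.const_mul t).exp.ennreal_ofReal
    (ENNReal.ofReal (rexp (t * u)))
  calc P {ω | u < S ω}
      ≤ P {ω | ENNReal.ofReal (rexp (t * u)) ≤ ENNReal.ofReal (rexp (t * S ω))} :=
        measure_mono fun ω hω => ENNReal.ofReal_le_ofReal
          (exp_le_exp.2 (mul_le_mul_of_nonneg_left (le_of_lt hω) ht))
    _ = ENNReal.ofReal (rexp (-t * u)) * (ENNReal.ofReal (rexp (t * u)) *
          P {ω | ENNReal.ofReal (rexp (t * u)) ≤ ENNReal.ofReal (rexp (t * S ω))}) := by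
        rw [← mul_assoc, ← ENNReal.ofReal_mul (exp_pos _).le, ← exp_add, neg_mul,
          neg_add_cancel, exp_zero, ENNReal.ofReal_one, one_mul]
    _ ≤ ENNReal.ofReal (rexp (-t * u)) * ENNReal.ofReal m := by
        gcongr
        exact hmarkov.trans (lintegral_exp_mul_le_of_tendsto_mgf hX hint hlim hmgf)
    _ = ENNReal.ofReal (rexp (-t * u) * m) := (ENNReal.ofReal_mul (exp_pos _).le).symm

lemma mgf_const_mul_sq_of_map_eq_gaussianReal {T : Ω → ℝ} (hT : Measurable T)
    (hlaw : P.map T = gaussianReal 0 1) {a t : ℝ} (h : 2 * t * a < 1) :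
    mgf (fun ω => a * T ω ^ 2) P t = (1 - 2 * t * a) ^ (-(1 / 2) : ℝ) := by
  rw [mgf_const_mul, ← Function.comp_def (fun x : ℝ => x ^ 2) T,
    ← mgf_map hT.aemeasurable (by fun_prop), hlaw, mgf_sq_gaussianReal (by linarith),
    mul_comm a t, mul_assoc]

lemma mgf_sum_const_mul_sq_of_map_eq_gaussianReal {ι : Type*} {T : ι → Ω → ℝ}
    (hT : ∀ i, Measurable (T i)) (hlaw : ∀ i, P.map (T i) = gaussianReal 0 1)
    (hindep : iIndepFun T P) {a : ι → ℝ} {t : ℝ} (h : ∀ i, 2 * t * a i < 1)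
    (s : Finset ι) :
    mgf (∑ i ∈ s, fun ω => a i * T i ω ^ 2) P t
      = ∏ i ∈ s, (1 - 2 * t * a i) ^ (-(1 / 2) : ℝ) := by
  have hindep' : iIndepFun (fun i ω => a i * T i ω ^ 2) P :=
    hindep.comp (fun i x => a i * x ^ 2) fun i => by fun_prop
  rw [hindep'.mgf_sum fun i => by fun_prop]
  exact Finset.prod_congr rfl fun i _ =>
    mgf_const_mul_sq_of_map_eq_gaussianReal (hT i) (hlaw i) (h i)

lemma ae_summable_mul_sq_of_map_eq_gaussianReal {T : ℕ → Ω → ℝ}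
    (hT : ∀ i, Measurable (T i)) (hlaw : ∀ i, P.map (T i) = gaussianReal 0 1)
    {a : ℕ → ℝ} (ha : Summable a) :
    ∀ᵐ ω ∂P, Summable fun i => a i * T i ω ^ 2 := by
  have hsq : ∫⁻ x, ‖x ^ 2‖ₑ ∂gaussianReal 0 1 ≠ ∞ :=
    (memLp_id_gaussianReal 2).integrable_sq.hasFiniteIntegral.ne
  refine ae_summable_mul_of_lintegral_enorm_le (fun i => by fun_prop) hsq (fun i => ?_) ha
  rw [← hlaw i]
  exact (lintegral_map (by fun_prop) (hT i)).ge

end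

/-- Let `(t i)` be i.i.d. standard real Gaussian random variables, `(λ i)` absolutely
summable reals, and `c > 0` with `sup_i 2cλ_i < 1`. Then for every `u ∈ ℝ`,
`P(Σ_i λ_i t_i² > u) ≤ exp(−c u) Π_i (1 − 2cλ_i)^(−1/2)`. -/
theorem stmt_7
    {Ω : Type*} [MeasurableSpace Ω] (P : Measure Ω) [IsProbabilityMeasure P]
    (t : ℕ → Ω → ℝ) (htmeas : ∀ i, Measurable (t i))
    (htlaw : ∀ i, P.map (t i) = gaussianReal 0 1)
    (htindep : iIndepFun t P)
    (lam : ℕ → ℝ) (hlam : Summable fun i => |lam i|)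
    (c : ℝ) (hc0 : 0 < c) (hc : (⨆ i, 2 * c * lam i) < 1) :
    ∀ u : ℝ,
      P {ω | u < ∑' i, lam i * t i ω ^ 2}
        ≤ ENNReal.ofReal
            (Real.exp (-c * u) * ∏' i, (1 - 2 * c * lam i) ^ (-(1 / 2) : ℝ)) := by
  have hlt (i : ℕ) : 2 * c * lam i < 1 :=
    (le_ciSup (hlam.of_abs.mul_left (2 * c)).tendsto_atTop_zero.bddAbove_range i).trans_lt hc
  have hmgf := mgf_sum_const_mul_sq_of_map_eq_gaussianReal htmeas htlaw htindep hlt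
  intro u
  refine measure_lt_le_of_tendsto_mgf
    (X := fun n => ∑ i ∈ Finset.range n, fun ω => lam i * t i ω ^ 2)
    (fun n => by fun_prop) (fun n => mgf_pos_iff.1 ?_) ?_ ?_ hc0.le u
  · rw [hmgf]
    exact Finset.prod_pos fun i _ => rpow_pos_of_pos (by linarith [hlt i]) _
  · filter_upwards [ae_summable_mul_sq_of_map_eq_gaussianReal htmeas htlaw hlam.of_abs]
      with ω hω
    simpa only [Finset.sum_apply] using hω.hasSum.tendsto_sum_nat
  · simpa only [hmgf] using
      (multipliable_one_sub_rpow (hlam.of_abs.mul_left (2 * c)) hlt _).hasProd.tendsto_prod_nat
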